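/- Let y₁, y₂ > 0 be real numbers. (i) If y₁² + y₂² > 1, then there is no (x₁,x₂) ∈ ℝ² with C(x₁,x₂) = 0 and E(x₁,x₂) = 0. (ii) If y₁² + y₂² = 1, then (x₁,x₂) = (0,0) is the unique point of ℝ² with C(x₁,x₂) = 0 and E(x₁,x₂) = 0. (iii) If y₁² + y₂² < 1, then there exist at least two distinct points (x₁,x₂) ∈ ℝ² with C(x₁,x₂) = 0 and E(x₁,x₂) = 0. -/

import Mathlib

/-!
The conic `C = 0` is the level set `x₁² + x₁x₂ + x₂² = 3s` of a positive definite quadratic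
form, where `s = 1 - y₁² - y₂²`; it is empty for `s < 0` and the origin for `s = 0`.
For `s > 0` it is an ellipse symmetric under `x ↦ -x`, and `E` is odd, so `E` changes sign
along half of the ellipse: the intermediate value theorem gives a zero `x ≠ 0`, and `-x` is a
second one.
-/

open Real

namespace PGL3Fiber

def C (y₁ y₂ : ℝ) (p : ℝ × ℝ) : ℝ :=
  p.1^2 + p.1 * p.2 + p.2^2 - 3 * (1 - y₁^2 - y₂^2)

def E (y₁ y₂ : ℝ) (p : ℝ × ℝ) : ℝ :=
  2 * p.1^3 + 3 * p.1^2 * p.2 + 9 * p.1 * y₁^2 + 18 * p.2 * y₁^2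
    - 2 * p.2^3 - 3 * p.1 * p.2^2 - 9 * p.2 * y₂^2 - 18 * p.1 * y₂^2

def fiber (y₁ y₂ : ℝ) : Set (ℝ × ℝ) := {p | C y₁ y₂ p = 0 ∧ E y₁ y₂ p = 0}

lemma sq_add_mul_add_sq_nonneg (a b : ℝ) : 0 ≤ a^2 + a * b + b^2 := by
  nlinarith [sq_nonneg (2 * a + b), sq_nonneg b]

lemma sq_add_mul_add_sq_eq_zero_iff {a b : ℝ} : a^2 + a * b + b^2 = 0 ↔ a = 0 ∧ b = 0 := by
  refine ⟨fun h => ?_, fun ⟨ha, hb⟩ => by simp [ha, hb]⟩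
  have hb : b = 0 := by nlinarith [sq_nonneg (2 * a + b), sq_nonneg b]
  subst hb
  simpa using h

lemma C_neg (y₁ y₂ : ℝ) (p : ℝ × ℝ) : C y₁ y₂ (-p) = C y₁ y₂ p := by
  simp only [C, Prod.fst_neg, Prod.snd_neg]
  ring

lemma E_neg (y₁ y₂ : ℝ) (p : ℝ × ℝ) : E y₁ y₂ (-p) = -E y₁ y₂ p := by
  simp only [E, Prod.fst_neg, Prod.snd_neg]
  ring

lemma neg_mem_fiber {y₁ y₂ : ℝ} {p : ℝ × ℝ} (hp : p ∈ fiber y₁ y₂) : -p ∈ fiber y₁ y₂ := by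
  obtain ⟨hC, hE⟩ := hp
  exact ⟨by rw [C_neg, hC], by rw [E_neg, hE, neg_zero]⟩

lemma fiber_eq_empty {y₁ y₂ : ℝ} (h : 1 < y₁^2 + y₂^2) : fiber y₁ y₂ = ∅ := by
  refine Set.eq_empty_of_forall_notMem fun p ⟨hC, _⟩ => ?_
  unfold C at hC
  linarith [sq_add_mul_add_sq_nonneg p.1 p.2]

lemma fiber_eq_singleton_zero {y₁ y₂ : ℝ} (h : y₁^2 + y₂^2 = 1) : fiber y₁ y₂ = {0} := by
  have hC : ∀ p, C y₁ y₂ p = p.1^2 + p.1 * p.2 + p.2^2 := fun p => by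
    rw [C, ← h]
    ring
  ext p
  simp only [fiber, Set.mem_ofPred_eq, Set.mem_singleton_iff, hC,
    sq_add_mul_add_sq_eq_zero_iff, Prod.ext_iff, Prod.fst_zero, Prod.snd_zero]
  refine ⟨And.left, fun hp => ⟨hp, ?_⟩⟩
  simp [E, hp.1, hp.2]

lemma ne_zero_of_mem_fiber {y₁ y₂ : ℝ} (h : y₁^2 + y₂^2 < 1) {p : ℝ × ℝ}
    (hp : p ∈ fiber y₁ y₂) : p ≠ 0 := by
  rintro rfl
  have hC := hp.1
  simp only [C, Prod.fst_zero, Prod.snd_zero] at hC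
  linarith

noncomputable def ellipsePoint (r θ : ℝ) : ℝ × ℝ :=
  (r * (cos θ + √3 * sin θ), r * (cos θ - √3 * sin θ))

lemma continuous_ellipsePoint (r : ℝ) : Continuous (ellipsePoint r) := by
  unfold ellipsePoint
  fun_prop

lemma ellipsePoint_pi (r : ℝ) : ellipsePoint r π = -ellipsePoint r 0 := by
  simp [ellipsePoint]

lemma ellipsePoint_quadratic (r θ : ℝ) :
    (ellipsePoint r θ).1^2 + (ellipsePoint r θ).1 * (ellipsePoint r θ).2
      + (ellipsePoint r θ).2^2 = 3 * r^2 := by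
  simp only [ellipsePoint]
  linear_combination (3 * r^2) * sin_sq_add_cos_sq θ
    + (r^2 * sin θ ^ 2) * Real.sq_sqrt (show (0 : ℝ) ≤ 3 by norm_num)

lemma exists_eq_zero_of_apply_eq_neg {f : ℝ → ℝ} (hf : Continuous f) {a b : ℝ}
    (hab : f b = -f a) : ∃ c, f c = 0 := by
  have h0 : (0 : ℝ) ∈ Set.uIcc (f a) (f b) := by
    rw [hab, Set.mem_uIcc]
    rcases le_total (f a) 0 with h | h
    · exact Or.inl ⟨h, by linarith⟩
    · exact Or.inr ⟨by linarith, h⟩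
  obtain ⟨c, -, hc⟩ := intermediate_value_uIcc hf.continuousOn h0
  exact ⟨c, hc⟩

lemma fiber_nonempty {y₁ y₂ : ℝ} (h : y₁^2 + y₂^2 < 1) : (fiber y₁ y₂).Nonempty := by
  set r := √(1 - y₁^2 - y₂^2)
  have hr : r^2 = 1 - y₁^2 - y₂^2 := Real.sq_sqrt (by linarith)
  obtain ⟨θ, hθ⟩ := exists_eq_zero_of_apply_eq_neg
    (f := fun θ => E y₁ y₂ (ellipsePoint r θ)) (a := 0) (b := π)
    (by unfold E; fun_prop (disch := exact continuous_ellipsePoint r))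
    (by simp only [ellipsePoint_pi, E_neg])
  refine ⟨ellipsePoint r θ, ?_, hθ⟩
  rw [C, ellipsePoint_quadratic, hr]
  ring

end PGL3Fiber

open PGL3Fiber in
theorem stmt_4 (y₁ y₂ : ℝ) :
    (1 < y₁^2 + y₂^2 →
      ¬ ∃ p : ℝ × ℝ,
        p.1^2 + p.1 * p.2 + p.2^2 - 3 * (1 - y₁^2 - y₂^2) = 0 ∧
        2 * p.1^3 + 3 * p.1^2 * p.2 + 9 * p.1 * y₁^2 + 18 * p.2 * y₁^2
          - 2 * p.2^3 - 3 * p.1 * p.2^2 - 9 * p.2 * y₂^2 - 18 * p.1 * y₂^2 = 0) ∧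
    (y₁^2 + y₂^2 = 1 →
      {p : ℝ × ℝ |
        p.1^2 + p.1 * p.2 + p.2^2 - 3 * (1 - y₁^2 - y₂^2) = 0 ∧
        2 * p.1^3 + 3 * p.1^2 * p.2 + 9 * p.1 * y₁^2 + 18 * p.2 * y₁^2
          - 2 * p.2^3 - 3 * p.1 * p.2^2 - 9 * p.2 * y₂^2 - 18 * p.1 * y₂^2 = 0}
        = {((0 : ℝ), (0 : ℝ))}) ∧
    (y₁^2 + y₂^2 < 1 →
      ∃ p q : ℝ × ℝ, p ≠ q ∧
        (p.1^2 + p.1 * p.2 + p.2^2 - 3 * (1 - y₁^2 - y₂^2) = 0 ∧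
         2 * p.1^3 + 3 * p.1^2 * p.2 + 9 * p.1 * y₁^2 + 18 * p.2 * y₁^2
           - 2 * p.2^3 - 3 * p.1 * p.2^2 - 9 * p.2 * y₂^2 - 18 * p.1 * y₂^2 = 0) ∧
        (q.1^2 + q.1 * q.2 + q.2^2 - 3 * (1 - y₁^2 - y₂^2) = 0 ∧
         2 * q.1^3 + 3 * q.1^2 * q.2 + 9 * q.1 * y₁^2 + 18 * q.2 * y₁^2
           - 2 * q.2^3 - 3 * q.1 * q.2^2 - 9 * q.2 * y₂^2 - 18 * q.1 * y₂^2 = 0)) := by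
  refine ⟨fun h ⟨p, hp⟩ => (fiber_eq_empty h).subset hp, fiber_eq_singleton_zero, fun h => ?_⟩
  obtain ⟨p, hp⟩ := fiber_nonempty h
  exact ⟨p, -p, fun hpp => ne_zero_of_mem_fiber h hp (self_eq_neg.mp hpp), hp, neg_mem_fiber hp⟩
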